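/- Consider a pure death Markov chain on {0,1,...,n} with death rate 2k from state k, started at n. The joint density of the jump times (s_1 < s_2 < ... < s_{n-1} < τ) (where τ is the hitting time of 0) is 2^n·n!·exp(-2n·s_1 - 2(n-1)(s_2 - s_1) - ... - 2(τ - s_{n-1})). The joint density of the jump times (r_1 < ... < r_{n-1} < σ) of the pure birth chain with birth rate 2k from state k started at 1 (σ the hitting time of n+1) is 2^n·n!·exp(-2r_1 - 4(r_2 - r_1) - ... - 2n(σ - r_{n-1})). Under the substitution σ = τ, r_j = τ - s_{n-j}, the two densities are equal; both exponents equal -2τ - 2·Σ_{j=1}^{n-1} s_j. -/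
import Mathlib


/-- The previous coordinate `t_{j-1}`, with the convention `t_0 = 0`. -/
noncomputable def prevCoord {k : ℕ} (t : Fin k → ℝ) (j : Fin k) : ℝ :=
  if h : (j : ℕ) = 0 then 0 else t ⟨(j : ℕ) - 1, by omega⟩

/-- Joint density of the `n` jump times `(s_1 < ⋯ < s_{n-1} < τ)` of the pure death
chain with rate `2k` from state `k`, started at `n` (zero-based index `j` carries
coefficient `2(n-j)`). -/
noncomputable def deathDensity (n : ℕ) (s : Fin n → ℝ) : ℝ :=
  2 ^ n * (n.factorial : ℝ) *
    Real.exp (-(∑ j : Fin n, 2 * ((n : ℝ) - (j : ℕ)) * (s j - prevCoord s j)))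

/-- Joint density of the `n` jump times `(r_1 < ⋯ < r_{n-1} < σ)` of the pure birth
chain with rate `2k` from state `k`, started at `1` (zero-based index `j` carries
coefficient `2(j+1)`). -/
noncomputable def birthDensity (n : ℕ) (r : Fin n → ℝ) : ℝ :=
  2 ^ n * (n.factorial : ℝ) *
    Real.exp (-(∑ j : Fin n, 2 * ((j : ℕ) + 1 : ℝ) * (r j - prevCoord r j)))

/-- Abel / telescoping summation for sums of the form `∑ c_i (T_i - T_{i-1})`. -/
lemma sum_tel (c T : ℕ → ℝ) (m : ℕ) :
    ∑ i ∈ Finset.range (m + 1), c i * (T i - (if i = 0 then 0 else T (i - 1)))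
      = c m * T m + ∑ i ∈ Finset.range m, (c i - c (i + 1)) * T i := by
  induction m with
  | zero => simp
  | succ k ih =>
    rw [Finset.sum_range_succ, ih, Finset.sum_range_succ]
    simp only [Nat.succ_ne_zero, if_false, Nat.add_sub_cancel]
    ring

/-- Under the time reversal `σ = τ`, `r_j = τ - s_{n-j}`, the death-chain density of the
jump times equals the birth-chain density of the reversed jump times, and both exponents
equal `2τ + 2 Σ_{j=1}^{n-1} s_j`. -/
theorem death_birth_reversal_density (n : ℕ) (hn : 1 ≤ n) (s : Fin n → ℝ)
    (hpos : ∀ j, 0 < s j) (hmono : StrictMono s) :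
    birthDensity n
        (fun j : Fin n =>
          if (j : ℕ) = n - 1 then s ⟨n - 1, by omega⟩
          else s ⟨n - 1, by omega⟩ - s ⟨n - 2 - (j : ℕ), by omega⟩)
      = deathDensity n s ∧
      ∑ j : Fin n, 2 * ((n : ℝ) - (j : ℕ)) * (s j - prevCoord s j)
        = 2 * s ⟨n - 1, by omega⟩
            + 2 * ∑ j : Fin n, (if (j : ℕ) < n - 1 then s j else 0) := by
  obtain ⟨m, rfl⟩ : ∃ m, n = m + 1 := ⟨n - 1, by omega⟩

  set S : ℕ → ℝ := fun i => if h : i < m + 1 then s ⟨i, h⟩ else 0 with hS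
  have hSval : ∀ (i : ℕ) (h : i < m + 1), S i = s ⟨i, h⟩ := fun i h => dif_pos h
  have hsS : ∀ j : Fin (m + 1), s j = S (j : ℕ) := by
    intro j; rw [hSval _ j.isLt]
  have hprev : ∀ (t : Fin (m + 1) → ℝ) (Tn : ℕ → ℝ),
      (∀ j : Fin (m + 1), t j = Tn (j : ℕ)) →
      ∀ j : Fin (m + 1), prevCoord t j
        = if (j : ℕ) = 0 then 0 else Tn ((j : ℕ) - 1) := by
    intro t Tn hT j
    unfold prevCoord
    split_ifs with h
    · rfl
    · exact hT ⟨(j : ℕ) - 1, by omega⟩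
  -- the death-chain exponent
  set cD : ℕ → ℝ := fun i => 2 * (((m + 1 : ℕ) : ℝ) - i) with hcD
  have hdeath :
      ∑ j : Fin (m + 1), 2 * (((m + 1 : ℕ) : ℝ) - (j : ℕ)) * (s j - prevCoord s j)
        = 2 * S m + ∑ i ∈ Finset.range m, 2 * S i := by
    rw [show (∑ j : Fin (m + 1), 2 * (((m + 1 : ℕ) : ℝ) - (j : ℕ)) * (s j - prevCoord s j))
        = ∑ j : Fin (m + 1),
            cD (j : ℕ) * (S (j : ℕ) - (if (j : ℕ) = 0 then 0 else S ((j : ℕ) - 1))) from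
      Finset.sum_congr rfl fun j _ => by rw [hsS j, hprev s S hsS j],
      Fin.sum_univ_eq_sum_range
        (fun i => cD i * (S i - (if i = 0 then 0 else S (i - 1)))) (m + 1),
      sum_tel]
    have h1 : cD m = 2 := by simp only [hcD]; push_cast; ring
    have h2 : ∀ i, cD i - cD (i + 1) = 2 := by intro i; simp only [hcD]; push_cast; ring
    rw [h1]
    congr 1
    exact Finset.sum_congr rfl fun i _ => by rw [h2]
  -- the reversed (birth-chain) coordinates
  set Rn : ℕ → ℝ := fun i => if i = m then S m else S m - S (m - 1 - i) with hRn
  set r : Fin (m + 1) → ℝ := fun j : Fin (m + 1) =>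
    if (j : ℕ) = m + 1 - 1 then s ⟨m + 1 - 1, by omega⟩
    else s ⟨m + 1 - 1, by omega⟩ - s ⟨m + 1 - 2 - (j : ℕ), by omega⟩ with hr
  have hrR : ∀ j : Fin (m + 1), r j = Rn (j : ℕ) := by
    intro j
    simp only [hr, hRn, Nat.add_sub_cancel]
    split_ifs with h
    · rw [hSval m (by omega)]
    · rw [hSval m (by omega), hSval (m - 1 - (j : ℕ)) (by omega)]
      congr 2
  set cB : ℕ → ℝ := fun i => 2 * ((i : ℝ) + 1) with hcB
  have hbirth : ∑ j : Fin (m + 1), 2 * ((j : ℕ) + 1 : ℝ) * (r j - prevCoord r j)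
      = 2 * S m + ∑ i ∈ Finset.range m, 2 * S i := by
    rw [show (∑ j : Fin (m + 1), 2 * ((j : ℕ) + 1 : ℝ) * (r j - prevCoord r j))
        = ∑ j : Fin (m + 1),
            cB (j : ℕ) * (Rn (j : ℕ) - (if (j : ℕ) = 0 then 0 else Rn ((j : ℕ) - 1))) from
      Finset.sum_congr rfl fun j _ => by rw [hrR j, hprev r Rn hrR j],
      Fin.sum_univ_eq_sum_range
        (fun i => cB i * (Rn i - (if i = 0 then 0 else Rn (i - 1)))) (m + 1),
      sum_tel]
    have h1 : cB m * Rn m = 2 * ((m : ℝ) + 1) * S m := by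
      simp only [hcB, hRn, if_pos rfl]
    have h2 : ∀ i ∈ Finset.range m, (cB i - cB (i + 1)) * Rn i
        = -2 * S m + 2 * S (m - 1 - i) := by
      intro i hi
      rw [Finset.mem_range] at hi
      simp only [hcB, hRn]
      rw [if_neg (by omega)]
      push_cast
      ring
    rw [h1, Finset.sum_congr rfl h2, Finset.sum_add_distrib, Finset.sum_const,
      Finset.card_range, ← Finset.mul_sum,
      Finset.sum_range_reflect (fun i => S i) m, ← Finset.mul_sum]
    ring
  constructor
  · unfold birthDensity deathDensity
    congr 1
    rw [show (∑ j : Fin (m + 1), 2 * ((j : ℕ) + 1 : ℝ) *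
          ((fun j : Fin (m + 1) =>
            if (j : ℕ) = m + 1 - 1 then s ⟨m + 1 - 1, by omega⟩
            else s ⟨m + 1 - 1, by omega⟩ - s ⟨m + 1 - 2 - (j : ℕ), by omega⟩) j
            - prevCoord (fun j : Fin (m + 1) =>
              if (j : ℕ) = m + 1 - 1 then s ⟨m + 1 - 1, by omega⟩
              else s ⟨m + 1 - 1, by omega⟩ - s ⟨m + 1 - 2 - (j : ℕ), by omega⟩) j))
        = ∑ j : Fin (m + 1), 2 * ((j : ℕ) + 1 : ℝ) * (r j - prevCoord r j) from rfl]
    rw [hbirth, hdeath]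
  · rw [hdeath]
    have h4 : ∑ j : Fin (m + 1), (if (j : ℕ) < m + 1 - 1 then s j else 0)
        = ∑ i ∈ Finset.range m, S i := by
      rw [show (∑ j : Fin (m + 1), (if (j : ℕ) < m + 1 - 1 then s j else 0))
          = ∑ j : Fin (m + 1), (if (j : ℕ) < m then S (j : ℕ) else 0) from
        Finset.sum_congr rfl fun j _ => by rw [Nat.add_sub_cancel, hsS j],
        Fin.sum_univ_eq_sum_range (fun i => if i < m then S i else 0) (m + 1),
        Finset.sum_range_succ, if_neg (lt_irrefl m),
        Finset.sum_congr rfl (fun i hi => if_pos (Finset.mem_range.mp hi))]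
      ring
    rw [h4, ← Finset.mul_sum]
    simp only [Nat.add_sub_cancel]
    rw [← hSval m (by omega)]
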